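/- Let p : ℝ^n → ℝ be a homogeneous degree-d multilinear polynomial and let k ≥ 1 be a real number. Let X be uniformly distributed on {−1,1}^n and let Y be a vector of n independent standard Gaussians. Then E[|p(X)|^k] ≤ (π/2)^{dk/2} · E[|p(Y)|^k]. -/

import Mathlib

open MeasureTheory ProbabilityTheory MvPolynomial

/-- The standard Gaussian measure on `ℝⁿ`. -/
noncomputable def stdGaussianPi (n : ℕ) : Measure (Fin n → ℝ) :=
  Measure.pi fun _ => gaussianReal 0 1

/-- A polynomial is multilinear if it has degree at most 1 in each variable. -/
def IsMultilinearPoly {σ : Type*} (p : MvPolynomial σ ℝ) : Prop :=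
  ∀ m ∈ p.support, ∀ i, m i ≤ 1

/-!
For a sign vector `x ∈ {-1,1}ⁿ` and `Y` standard Gaussian, independence and multilinearity give
`E[p(x ⊙ |Y|)] = (E|Y₁|)^d p(x) = (2/π)^{d/2} p(x)`, so by Jensen
`(2/π)^{dk/2} |p(x)|^k ≤ E|p(x ⊙ |Y|)|^k`. Averaging over `x`, the vector `x ⊙ |Y|` with `x`
uniform has the law of `Y` (the sign pattern of `Y` is uniform and independent of `|Y|`), so the
right-hand sides average to `E|p(Y)|^k`.
-/

open Real Set Finset
open scoped ENNReal NNReal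

lemma rpow_abs_integral_le_integral_abs_rpow {α : Type*} [MeasurableSpace α] {μ : Measure α}
    [IsProbabilityMeasure μ] {f : α → ℝ} {k : ℝ} (hk : 1 ≤ k) (hf : Integrable f μ)
    (hfk : Integrable (fun a => |f a| ^ k) μ) :
    |∫ a, f a ∂μ| ^ k ≤ ∫ a, |f a| ^ k ∂μ :=
  calc |∫ a, f a ∂μ| ^ k ≤ (∫ a, |f a| ∂μ) ^ k :=
        rpow_le_rpow (abs_nonneg _) abs_integral_le_integral_abs (by linarith)
    _ ≤ ∫ a, |f a| ^ k ∂μ :=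
        (convexOn_rpow hk).map_integral_le
          (continuousOn_id.rpow_const fun _ _ => Or.inr (by linarith)) isClosed_Ici
          (ae_of_all _ fun a => abs_nonneg (f a)) hf.abs hfk

lemma MeasureTheory.MemLp.integrable_abs_rpow {α : Type*} [MeasurableSpace α] {μ : Measure α}
    [IsFiniteMeasure μ] {f : α → ℝ} {k : ℝ} (hk : 0 ≤ k) (hf : MemLp f (ENNReal.ofReal k) μ) :
    Integrable (fun a => |f a| ^ k) μ := by
  simpa [ENNReal.toReal_ofReal hk] using hf.integrable_norm_rpow'

section Pi

variable {ι E : Type*} [Fintype ι] [MeasurableSpace E] {μ : ι → Measure E} {q : ℝ≥0∞}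

lemma memLp_fintype_prod [∀ i, SigmaFinite (μ i)] {g : ι → E → ℝ} (hq0 : q ≠ 0) (hq : q ≠ ∞)
    (hg : ∀ i, MemLp (g i) q (μ i)) :
    MemLp (fun x => ∏ i, g i (x i)) q (Measure.pi μ) := by
  have hmeas : AEStronglyMeasurable (fun x => ∏ i, g i (x i)) (Measure.pi μ) :=
    Finset.aestronglyMeasurable_fun_prod _ fun i _ =>
      (hg i).1.comp_quasiMeasurePreserving (Measure.quasiMeasurePreserving_eval μ i)
  rw [← integrable_norm_rpow_iff hmeas hq0 hq]
  simp_rw [norm_prod, ← Real.finsetProd_rpow _ _ fun i _ => norm_nonneg _]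
  exact Integrable.fintype_prod fun i => (hg i).integrable_norm_rpow hq0 hq

lemma memLp_eval_pi [∀ i, IsFiniteMeasure (μ i)] (p : MvPolynomial ι ℝ) {g : ι → E → ℝ}
    (hq0 : q ≠ 0) (hq : q ≠ ∞) (hg : ∀ i (m : ℕ), MemLp (fun t => g i t ^ m) q (μ i)) :
    MemLp (fun x => eval (fun i => g i (x i)) p) q (Measure.pi μ) := by
  simp only [eval_eq']
  exact memLp_finsetSum _ fun (m : ι →₀ ℕ) _ =>
    (memLp_fintype_prod hq0 hq fun i => hg i (m i)).const_mul _

end Pi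

section Multilinear

variable {E : Type*} [MeasurableSpace E] {μ : Measure E} [IsProbabilityMeasure μ] {f : E → ℝ}
  {e : ℕ}

lemma integral_pow_of_le_one (he : e ≤ 1) : ∫ t, f t ^ e ∂μ = (∫ t, f t ∂μ) ^ e := by
  interval_cases e <;> simp

lemma MeasureTheory.Integrable.pow_of_le_one (hf : Integrable f μ) (he : e ≤ 1) :
    Integrable (fun t => f t ^ e) μ := by
  interval_cases e <;> simp [hf]

variable {ι : Type*} [Fintype ι] {g : E → ℝ} (x : ι → ℝ)

lemma integral_prod_mul_pow_pi {m : ι →₀ ℕ} (hm : ∀ i, m i ≤ 1) :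
    ∫ y, ∏ i, (x i * g (y i)) ^ m i ∂Measure.pi (fun _ => μ) =
      (∫ t, g t ∂μ) ^ m.degree * ∏ i, x i ^ m i := by
  rw [integral_fintype_prod_eq_prod (fun i t => (x i * g t) ^ m i), Finsupp.degree_eq_sum,
    ← prod_pow_eq_pow_sum, ← prod_mul_distrib]
  refine prod_congr rfl fun i _ => ?_
  rw [integral_pow_of_le_one (hm i), integral_const_mul, mul_pow, mul_comm]

lemma integral_eval_mul_pi {p : MvPolynomial ι ℝ} {d : ℕ} (hhom : p.IsHomogeneous d)
    (hml : IsMultilinearPoly p) (hg : Integrable g μ) :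
    ∫ y, eval (fun i => x i * g (y i)) p ∂Measure.pi (fun _ => μ) =
      (∫ t, g t ∂μ) ^ d * eval x p := by
  have hint : ∀ m ∈ p.support, Integrable (fun y => coeff m p * ∏ i, (x i * g (y i)) ^ m i)
      (Measure.pi fun _ => μ) := fun m hm =>
    (Integrable.fintype_prod fun i =>
      (hg.const_mul (x i)).pow_of_le_one (hml m hm i)).const_mul _
  simp only [eval_eq']
  rw [integral_finsetSum _ hint, mul_sum]
  refine sum_congr rfl fun m hm => ?_
  have hdeg : m.degree = d := (hhom.degree_eq_sum_deg_support hm).symm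
  rw [integral_const_mul, integral_prod_mul_pow_pi x (hml m hm), hdeg]
  ring

end Multilinear

section Signs

variable {ι : Type*}

def signVec (σ : ι → Bool) : ι → ℝ := fun i => if σ i then 1 else -1

lemma signVec_mul_abs (σ : ι → Bool) (y : ι → ℝ) :
    (fun i => signVec σ i * |y i|) =
      fun i => signVec (fun j => xor (σ j) (decide (y j < 0))) i * y i := by
  funext i
  rcases lt_or_ge (y i) 0 with hy | hy <;> cases h : σ i <;>
    simp [signVec, h, hy, abs_of_neg, abs_of_nonneg, not_lt.mpr]

lemma sum_signVec_mul_abs [Fintype ι] [DecidableEq ι] {M : Type*} [AddCommMonoid M]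
    (F : (ι → ℝ) → M) (y : ι → ℝ) :
    ∑ σ : ι → Bool, F (fun i => signVec σ i * |y i|) =
      ∑ σ : ι → Bool, F (fun i => signVec σ i * y i) := by
  have hflip : Function.Involutive fun (σ : ι → Bool) i => xor (σ i) (decide (y i < 0)) :=
    fun σ => by simp
  simp_rw [signVec_mul_abs]
  exact Fintype.sum_bijective _ hflip.bijective _ _ fun σ => rfl

def signMulEquiv (σ : ι → Bool) : (ι → ℝ) ≃ᵐ (ι → ℝ) :=
  MeasurableEquiv.ofInvolutive (fun y i => signVec σ i * y i)
    (fun y => by funext i; by_cases h : σ i <;> simp [signVec, h])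
    (measurable_pi_lambda _ fun i => (measurable_pi_apply i).const_mul _)

end Signs

section Gaussian

lemma memLp_pow_gaussianReal {μ : ℝ} {v : ℝ≥0} (m : ℕ) {q : ℝ≥0∞} (hq : q ≠ ∞) :
    MemLp (fun t : ℝ => t ^ m) q (gaussianReal μ v) := by
  rcases eq_or_ne m 0 with rfl | hm
  · simpa using memLp_const (1 : ℝ)
  have h := (memLp_id_gaussianReal' (μ := μ) (v := v) (q * m)
    (ENNReal.mul_ne_top hq (ENNReal.natCast_ne_top m))).norm_rpow_div m
  rw [ENNReal.mul_div_cancel_right (by exact_mod_cast hm) (ENNReal.natCast_ne_top m)] at h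
  refine (memLp_norm_iff (by fun_prop)).mp (h.congr_norm (by fun_prop) (ae_of_all _ fun t => ?_))
  simp [norm_pow]

lemma integral_Ioi_mul_exp_neg_sq_div_two : ∫ x in Ioi (0 : ℝ), x * exp (-x ^ 2 / 2) = 1 := by
  have h := integral_rpow_mul_exp_neg_mul_rpow (p := 2) (q := 1) (b := 2⁻¹)
    (by norm_num) (by norm_num) (by norm_num)
  norm_num [Real.rpow_neg_one] at h
  rw [← h]
  refine setIntegral_congr_fun measurableSet_Ioi fun x _ => ?_
  ring_nf

lemma integral_abs_gaussianReal : ∫ x, |x| ∂gaussianReal 0 1 = √(2 / π) := by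
  have hdensity (x : ℝ) :
      gaussianPDFReal 0 1 x • |x| = (√(2 * π))⁻¹ * (|x| * exp (-|x| ^ 2 / 2)) := by
    simp only [gaussianPDFReal, NNReal.coe_one, mul_one, sub_zero, smul_eq_mul, sq_abs]
    ring
  rw [integral_gaussianReal_eq_integral_smul one_ne_zero]
  simp_rw [hdensity, integral_const_mul]
  rw [integral_comp_abs (f := fun x => x * exp (-x ^ 2 / 2)),
    integral_Ioi_mul_exp_neg_sq_div_two, sqrt_div' _ pi_pos.le, sqrt_mul' _ pi_pos.le]
  field_simp
  rw [sq_sqrt zero_le_two]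

variable {n : ℕ}

instance : IsProbabilityMeasure (stdGaussianPi n) := by
  unfold stdGaussianPi
  infer_instance

lemma memLp_eval_stdGaussianPi (p : MvPolynomial (Fin n) ℝ) {q : ℝ≥0∞} (hq0 : q ≠ 0)
    (hq : q ≠ ∞) : MemLp (fun y => eval y p) q (stdGaussianPi n) :=
  memLp_eval_pi (μ := fun _ => gaussianReal 0 1) p (g := fun _ t => t) hq0 hq
    fun _ m => memLp_pow_gaussianReal m hq

lemma memLp_eval_mul_abs_stdGaussianPi (p : MvPolynomial (Fin n) ℝ) (x : Fin n → ℝ)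
    {q : ℝ≥0∞} (hq0 : q ≠ 0) (hq : q ≠ ∞) :
    MemLp (fun y => eval (fun i => x i * |y i|) p) q (stdGaussianPi n) := by
  refine memLp_eval_pi (μ := fun _ => gaussianReal 0 1) p (g := fun i t => x i * |t|) hq0 hq
    fun i m => ?_
  have h := (memLp_pow_gaussianReal (μ := 0) (v := 1) m hq).norm.const_mul (x i ^ m)
  simp only [norm_pow, Real.norm_eq_abs] at h
  simpa only [mul_pow] using h

lemma rpow_abs_eval_le_integral {d : ℕ} {p : MvPolynomial (Fin n) ℝ} (hhom : p.IsHomogeneous d)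
    (hml : IsMultilinearPoly p) {k : ℝ} (hk : 1 ≤ k) (x : Fin n → ℝ) :
    |eval x p| ^ k ≤
      (π / 2) ^ ((d : ℝ) * k / 2) * ∫ y, |eval (fun i => x i * |y i|) p| ^ k ∂stdGaussianPi n := by
  have hk0 : 0 ≤ k := by linarith
  have hmean :
      ∫ y, eval (fun i => x i * |y i|) p ∂stdGaussianPi n = √(2 / π) ^ d * eval x p := by
    rw [← integral_abs_gaussianReal]
    exact integral_eval_mul_pi x hhom hml
      (memLp_one_iff_integrable.mp (memLp_id_gaussianReal' 1 ENNReal.one_ne_top)).abs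
  have hjensen := rpow_abs_integral_le_integral_abs_rpow hk
    (memLp_one_iff_integrable.mp (memLp_eval_mul_abs_stdGaussianPi p x one_ne_zero
      ENNReal.one_ne_top))
    ((memLp_eval_mul_abs_stdGaussianPi p x (ENNReal.ofReal_pos.mpr (by linarith)).ne'
      ENNReal.ofReal_ne_top).integrable_abs_rpow hk0)
  rw [hmean, abs_mul, abs_of_nonneg (by positivity), mul_rpow (by positivity) (abs_nonneg _)]
    at hjensen
  have hconst : (π / 2) ^ ((d : ℝ) * k / 2) * (√(2 / π) ^ d) ^ k = 1 := by
    rw [sqrt_eq_rpow, ← rpow_natCast, ← rpow_mul (by positivity), ← rpow_mul (by positivity),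
      show 1 / 2 * ((d : ℝ) * k) = d * k / 2 by ring, ← mul_rpow (by positivity) (by positivity),
      div_mul_div_comm, mul_comm π, div_self (by positivity), one_rpow]
  calc |eval x p| ^ k
      = (π / 2) ^ ((d : ℝ) * k / 2) * ((√(2 / π) ^ d) ^ k * |eval x p| ^ k) := by
        rw [← mul_assoc, hconst, one_mul]
    _ ≤ _ := mul_le_mul_of_nonneg_left hjensen (by positivity)

lemma measurePreserving_signMulEquiv (σ : Fin n → Bool) :
    MeasurePreserving (signMulEquiv σ) (stdGaussianPi n) (stdGaussianPi n) := by
  refine measurePreserving_pi _ _ fun i => ⟨measurable_const_mul _, ?_⟩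
  show (gaussianReal 0 1).map (fun t => signVec σ i * t) = _
  by_cases h : σ i
  · simp [signVec, h]
  · simpa [signVec, h] using gaussianReal_map_neg (μ := 0) (v := 1)

lemma sum_integral_signVec_mul_abs {F : (Fin n → ℝ) → ℝ}
    (hF : Integrable F (stdGaussianPi n))
    (hFabs : ∀ σ, Integrable (fun y => F (fun i => signVec σ i * |y i|)) (stdGaussianPi n)) :
    ∑ σ : Fin n → Bool, ∫ y, F (fun i => signVec σ i * |y i|) ∂stdGaussianPi n =
      2 ^ n * ∫ y, F y ∂stdGaussianPi n := by
  have hFσ (σ : Fin n → Bool) : Integrable (F ∘ signMulEquiv σ) (stdGaussianPi n) :=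
    (measurePreserving_signMulEquiv σ).integrable_comp_emb
      (signMulEquiv σ).measurableEmbedding |>.mpr hF
  calc ∑ σ : Fin n → Bool, ∫ y, F (fun i => signVec σ i * |y i|) ∂stdGaussianPi n
      = ∫ y, ∑ σ : Fin n → Bool, F (fun i => signVec σ i * |y i|) ∂stdGaussianPi n :=
        (integral_finsetSum _ fun σ _ => hFabs σ).symm
    _ = ∫ y, ∑ σ : Fin n → Bool, F (signMulEquiv σ y) ∂stdGaussianPi n := by
        simp_rw [sum_signVec_mul_abs F]; rfl
    _ = ∑ σ : Fin n → Bool, ∫ y, F (signMulEquiv σ y) ∂stdGaussianPi n :=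
        integral_finsetSum _ fun σ _ => hFσ σ
    _ = 2 ^ n * ∫ y, F y ∂stdGaussianPi n := by
        simp [(measurePreserving_signMulEquiv _).integral_comp']

end Gaussian

/-- Bernoulli moments are dominated by Gaussian moments: for `p` a homogeneous degree-`d`
multilinear polynomial, `X` uniform on `{-1,1}ⁿ` and `Y` standard Gaussian on `ℝⁿ`,
`E[|p(X)|^k] ≤ (π/2)^{dk/2} E[|p(Y)|^k]` for every real `k ≥ 1`. -/
theorem bernoulliMomentLem (n d : ℕ) (p : MvPolynomial (Fin n) ℝ)
    (hhom : p.IsHomogeneous d) (hml : IsMultilinearPoly p) (k : ℝ) (hk : 1 ≤ k) :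
    (∑ σ : Fin n → Bool, |eval (fun i => if σ i then (1 : ℝ) else -1) p| ^ k) / 2 ^ n ≤
      (Real.pi / 2) ^ ((d : ℝ) * k / 2) * ∫ y, |eval y p| ^ k ∂stdGaussianPi n := by
  have hk0 : 0 ≤ k := by linarith
  have hq0 : ENNReal.ofReal k ≠ 0 := (ENNReal.ofReal_pos.mpr (by linarith)).ne'
  rw [div_le_iff₀ (by positivity)]
  calc ∑ σ : Fin n → Bool, |eval (signVec σ) p| ^ k
      ≤ ∑ σ : Fin n → Bool, (π / 2) ^ ((d : ℝ) * k / 2) *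
          ∫ y, |eval (fun i => signVec σ i * |y i|) p| ^ k ∂stdGaussianPi n :=
        sum_le_sum fun σ _ => rpow_abs_eval_le_integral hhom hml hk (signVec σ)
    _ = (π / 2) ^ ((d : ℝ) * k / 2) * (2 ^ n * ∫ y, |eval y p| ^ k ∂stdGaussianPi n) := by
        rw [← mul_sum, sum_integral_signVec_mul_abs (F := fun y => |eval y p| ^ k)
          ((memLp_eval_stdGaussianPi p hq0 ENNReal.ofReal_ne_top).integrable_abs_rpow hk0)
          fun σ => (memLp_eval_mul_abs_stdGaussianPi p (signVec σ) hq0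
            ENNReal.ofReal_ne_top).integrable_abs_rpow hk0]
    _ = _ := by ring
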